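/- arXiv:1308.2662 — 2 statements merged into one kernel-verified Lean document; each statement's English description precedes it below -/
import Mathlib

section
/- Let W := {W(f_{λ;1},…,f_{λ;m})}_{λ∈ℂ^N}, where f_{λ;k} := P_k e^{Q_k}, be the family of Wronskians of the families {P_k e^{Q_k}}_{λ∈ℂ^N} of generalized exponential polynomial summands, regarded as a family of holomorphic functions on the unit disk depending holomorphically (polynomially) on λ ∈ ℂ^N. Then for every point μ ∈ ℂ^N the cyclicity of W at μ satisfies c(W;μ) ≤ mp + (1/2)m(m−1)(q−1). -/
open Metric

/-- The order of vanishing of `f` at `z` (the least `n` with nonzero `n`-th derivative). -/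
noncomputable def ordAt (f : ℂ → ℂ) (z : ℂ) : ℕ :=
  sInf {n : ℕ | iteratedDeriv n f z ≠ 0}

/-- `f` has at most `κ` zeros in the disk `D_δ`, counting multiplicities. -/
def AtMostZeros (f : ℂ → ℂ) (δ : ℝ) (κ : ℕ) : Prop :=
  ∀ S : Finset ℂ, (S : Set ℂ) ⊆ Metric.ball (0 : ℂ) δ → ∑ z ∈ S, ordAt f z ≤ κ

/-- `f` has exactly `κ` zeros in the disk `D_δ`, counting multiplicities. -/
def ExactZeros (f : ℂ → ℂ) (δ : ℝ) (κ : ℕ) : Prop :=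
  AtMostZeros f δ κ ∧
    ∃ S : Finset ℂ, (S : Set ℂ) ⊆ Metric.ball (0 : ℂ) δ ∧ ∑ z ∈ S, ordAt f z = κ

/-- The central set `C(F;V)` of the family `{f_λ}_{λ∈V}` of functions on `D_ρ`. -/
def centralSet {Λ : Type*} (ρ : ℝ) (V : Set Λ) (f : Λ → ℂ → ℂ) : Set Λ :=
  {l | l ∈ V ∧ ∀ z ∈ Metric.ball (0 : ℂ) ρ, f l z = 0}

/-- The family `{f_λ}_{λ∈V}` of holomorphic functions on `D_ρ` has cyclicity `κ`
on the compact set `K ⊆ V` (Bautin-type definition). -/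
def HasCyclicity {Λ : Type*} [PseudoMetricSpace Λ] (ρ : ℝ) (V : Set Λ)
    (f : Λ → ℂ → ℂ) (K : Set Λ) (κ : ℕ) : Prop :=
  ∃ ε₀ > (0 : ℝ), ∃ δ₀ > (0 : ℝ), δ₀ ≤ ρ ∧
    (∀ l ∈ (⋃ μ ∈ K, Metric.ball μ ε₀) ∩ (V \ centralSet ρ V f),
      AtMostZeros (f l) δ₀ κ) ∧
    (∀ ε ∈ Set.Ioo (0 : ℝ) ε₀, ∀ δ ∈ Set.Ioo (0 : ℝ) δ₀,
      ∃ l ∈ (⋃ μ ∈ K, Metric.ball μ ε) ∩ (V \ centralSet ρ V f),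
        ExactZeros (f l) δ κ)

/-- The Wronskian determinant `W(g_1,…,g_l)`. -/
noncomputable def wronskian {l : ℕ} (g : Fin l → ℂ → ℂ) (z : ℂ) : ℂ :=
  Matrix.det (Matrix.of fun i j : Fin l => iteratedDeriv (i : ℕ) (g j) z)

/-- The index set for the parameter space `ℂ^N`, `N = m(p+q+1)`: a parameter is a string
`((c_{ki})_{0≤i≤p},(d_{kj})_{1≤j≤q})_{1≤k≤m}`.  `Sum.inl (k,i)` indexes `c_{ki}` and
`Sum.inr (k,j)` indexes `d_{k(j+1)}`. -/
abbrev GEPIdx (p q m : ℕ) := (Fin m × Fin (p + 1)) ⊕ (Fin m × Fin q)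

/-- The polynomial `P_k(z) = ∑_{i=0}^p c_{ki} z^i` determined by the parameter `l`. -/
noncomputable def gepP (p q m : ℕ) (l : GEPIdx p q m → ℂ) (k : Fin m) : Polynomial ℂ :=
  ∑ i : Fin (p + 1), Polynomial.C (l (Sum.inl (k, i))) * Polynomial.X ^ (i : ℕ)

/-- The polynomial `Q_k(z) = ∑_{j=1}^q d_{kj} z^j` determined by the parameter `l`. -/
noncomputable def gepQ (p q m : ℕ) (l : GEPIdx p q m → ℂ) (k : Fin m) : Polynomial ℂ :=
  ∑ j : Fin q, Polynomial.C (l (Sum.inr (k, j))) * Polynomial.X ^ ((j : ℕ) + 1)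

/-- The generalized exponential polynomial `f_λ(z) = ∑_{k=1}^m P_k(z) e^{Q_k(z)}`. -/
noncomputable def gep (p q m : ℕ) (l : GEPIdx p q m → ℂ) (z : ℂ) : ℂ :=
  ∑ k : Fin m, (gepP p q m l k).eval z * Complex.exp ((gepQ p q m l k).eval z)

/-- The `n`-th Maclaurin coefficient `a_n(λ)` of `f_λ`. -/
noncomputable def gepCoeff (p q m : ℕ) (n : ℕ) (l : GEPIdx p q m → ℂ) : ℂ :=
  iteratedDeriv n (gep p q m l) 0 / n.factorial

/-- `c_{p,q,m} := m − 1 + mp + (1/2)m(m−1)(q−1)`. -/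
def cpqm (p q m : ℕ) : ℕ := (m - 1) + m * p + m * (m - 1) * (q - 1) / 2

/-!
Since `(P e^Q)^{(i)} = (D_Q^i P) e^Q` with `D_Q P = P' + P Q'`, the Wronskian of
`P₁e^{Q₁}, …, P_m e^{Q_m}` factors as `T · e^{Q₁ + ⋯ + Q_m}`, where `T` is the determinant of the
polynomial matrix `(D_{Q_j}^i P_j)_{i,j}`, whose `(i, j)` entry has degree at most `p + i(q - 1)`.
So a Wronskian that is not identically zero has at most `deg T ≤ mp + m(m-1)(q-1)/2` zeros in
all of `ℂ`, counted with multiplicity, and the parameter with exactly `κ` zeros provided by the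
cyclicity gives `κ ≤ deg T`.
-/

open Polynomial hiding wronskian
open scoped ContDiff

namespace Polynomial

variable {𝕜 : Type*} [NontriviallyNormedField 𝕜]

theorem contDiff_eval (T : 𝕜[X]) (n : WithTop ℕ∞) : ContDiff 𝕜 n fun x => T.eval x := by
  simpa only [aeval_def, eval₂_eq_eval_map, Polynomial.map_id, Algebra.algebraMap_self] using
    T.contDiff_aeval (𝕜 := 𝕜) n

theorem iteratedDeriv_eval (T : 𝕜[X]) (k : ℕ) :
    iteratedDeriv k (fun x => T.eval x) = fun x => (derivative^[k] T).eval x := by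
  induction k with
  | zero => rfl
  | succ k ih =>
    ext x
    rw [iteratedDeriv_succ, ih, Function.iterate_succ_apply', Polynomial.deriv]

end Polynomial

theorem Multiset.sum_count_le_card {α : Type*} [DecidableEq α] (S : Finset α) (M : Multiset α) :
    ∑ a ∈ S, M.count a ≤ Multiset.card M :=
  calc ∑ a ∈ S, M.count a ≤ ∑ a ∈ S ∪ M.toFinset, M.count a :=
        Finset.sum_le_sum_of_subset Finset.subset_union_left
    _ = Multiset.card M := Multiset.sum_count_eq_card fun a ha => by simp [ha]

theorem Polynomial.sum_rootMultiplicity_le_natDegree {R : Type*} [CommRing R] [IsDomain R]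
    [DecidableEq R] (S : Finset R) (T : R[X]) :
    ∑ a ∈ S, T.rootMultiplicity a ≤ T.natDegree :=
  calc ∑ a ∈ S, T.rootMultiplicity a = ∑ a ∈ S, T.roots.count a := by simp only [count_roots]
    _ ≤ Multiset.card T.roots := Multiset.sum_count_le_card S T.roots
    _ ≤ T.natDegree := T.card_roots'

theorem Polynomial.natDegree_det_le {R : Type*} [CommRing R] {m : ℕ}
    (A : Matrix (Fin m) (Fin m) R[X]) {p e : ℕ} (h : ∀ i j, (A i j).natDegree ≤ p + i * e) :
    A.det.natDegree ≤ m * p + m * (m - 1) / 2 * e := by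
  rw [Matrix.det_apply']
  refine natDegree_sum_le_of_forall_le _ _ fun σ _ => ?_
  calc (((Equiv.Perm.sign σ : ℤ) : R[X]) * ∏ i, A (σ i) i).natDegree
      ≤ ∑ i, (A (σ i) i).natDegree := by
        refine natDegree_mul_le.trans ?_
        rw [natDegree_intCast, zero_add]
        exact natDegree_prod_le _ _
    _ ≤ ∑ i : Fin m, (p + σ i * e) := Finset.sum_le_sum fun i _ => h (σ i) i
    _ = m * p + m * (m - 1) / 2 * e := by
        rw [Equiv.sum_comp σ fun i : Fin m => p + i * e, Finset.sum_add_distrib,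
          ← Finset.sum_mul, Fin.sum_univ_eq_sum_range (fun i => i) m, Finset.sum_range_id]
        simp

theorem ordAt_eval_mul_le_rootMultiplicity {T : ℂ[X]} (hT : T ≠ 0) {g : ℂ → ℂ}
    (hg : ContDiff ℂ ∞ g) {z : ℂ} (hgz : g z ≠ 0) :
    ordAt (fun w => T.eval w * g w) z ≤ T.rootMultiplicity z := by
  set r := T.rootMultiplicity z
  refine Nat.sInf_le (show iteratedDeriv r (fun w => T.eval w * g w) z ≠ 0 from ?_)
  have hlower : ∀ i ∈ Finset.range r,
      (r.choose i : ℂ) * iteratedDeriv i (fun w => T.eval w) z * iteratedDeriv (r - i) g z = 0 :=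
    fun i hi => by
      simp only [T.iteratedDeriv_eval]
      rw [isRoot_iterate_derivative_of_lt_rootMultiplicity (Finset.mem_range.mp hi), mul_zero,
        zero_mul]
  rw [iteratedDeriv_fun_mul (T.contDiff_eval _).contDiffAt
      (hg.of_le (WithTop.coe_le_coe.mpr le_top)).contDiffAt,
    Finset.sum_range_succ, Finset.sum_eq_zero hlower, zero_add, Nat.choose_self, Nat.cast_one,
    one_mul, Nat.sub_self, iteratedDeriv_zero]
  simp only [T.iteratedDeriv_eval]
  rw [eval_iterate_derivative_rootMultiplicity, nsmul_eq_mul]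
  exact mul_ne_zero (mul_ne_zero (Nat.cast_ne_zero.mpr r.factorial_ne_zero)
    (eval_divByMonic_pow_rootMultiplicity_ne_zero z hT)) hgz

namespace Polynomial

variable {R : Type*} [CommSemiring R]

noncomputable def expDerivative (Q P : R[X]) : R[X] := derivative P + P * derivative Q

theorem natDegree_iterate_expDerivative_le {P Q : R[X]} {p q : ℕ} (hP : P.natDegree ≤ p)
    (hQ : Q.natDegree ≤ q) (n : ℕ) : ((expDerivative Q)^[n] P).natDegree ≤ p + n * (q - 1) := by
  induction n with
  | zero => simpa using hP
  | succ n ih =>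
    rw [Function.iterate_succ_apply']
    refine (natDegree_add_le _ _).trans (max_le ?_ ?_)
    · exact (natDegree_derivative_le _).trans ((Nat.sub_le _ 1).trans
        (ih.trans (Nat.add_le_add_left (Nat.mul_le_mul_right _ n.le_succ) p)))
    · calc _ ≤ (p + n * (q - 1)) + (q - 1) := natDegree_mul_le.trans
            (add_le_add ih ((natDegree_derivative_le Q).trans (Nat.sub_le_sub_right hQ 1)))
        _ = p + (n + 1) * (q - 1) := by ring

end Polynomial

theorem iteratedDeriv_eval_mul_exp (P Q : ℂ[X]) (n : ℕ) :
    iteratedDeriv n (fun w => P.eval w * Complex.exp (Q.eval w))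
      = fun w => ((expDerivative Q)^[n] P).eval w * Complex.exp (Q.eval w) := by
  induction n with
  | zero => rfl
  | succ n ih =>
    ext z
    rw [iteratedDeriv_succ, ih, ((((expDerivative Q)^[n] P).hasDerivAt z).fun_mul
      (Q.hasDerivAt z).cexp).deriv, Function.iterate_succ_apply', expDerivative]
    simp only [eval_add, eval_mul]
    ring

theorem wronskian_eval_mul_exp {m : ℕ} (P Q : Fin m → ℂ[X]) (z : ℂ) :
    wronskian (fun k w => (P k).eval w * Complex.exp ((Q k).eval w)) z
      = (Matrix.of fun i j : Fin m => (expDerivative (Q j))^[i] (P j)).det.eval z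
          * Complex.exp ((∑ k, Q k).eval z) := by
  have hfactor : (Matrix.of fun i j : Fin m =>
      iteratedDeriv i (fun w => (P j).eval w * Complex.exp ((Q j).eval w)) z)
      = (evalRingHom z).mapMatrix (Matrix.of fun i j : Fin m => (expDerivative (Q j))^[i] (P j))
        * Matrix.diagonal fun j => Complex.exp ((Q j).eval z) := by
    ext i j
    simp [Matrix.mul_diagonal, iteratedDeriv_eval_mul_exp]
  unfold wronskian
  rw [hfactor, Matrix.det_mul, ← RingHom.map_det, Matrix.det_diagonal,
    eval_finsetSum, Complex.exp_sum, coe_evalRingHom]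

theorem atMostZeros_wronskian_eval_mul_exp {m p q : ℕ} {P Q : Fin m → ℂ[X]}
    (hP : ∀ k, (P k).natDegree ≤ p) (hQ : ∀ k, (Q k).natDegree ≤ q) {z₀ : ℂ}
    (hz₀ : wronskian (fun k w => (P k).eval w * Complex.exp ((Q k).eval w)) z₀ ≠ 0) (δ : ℝ) :
    AtMostZeros (wronskian fun k w => (P k).eval w * Complex.exp ((Q k).eval w)) δ
      (m * p + m * (m - 1) * (q - 1) / 2) := by
  classical
  set T := (Matrix.of fun i j : Fin m => (expDerivative (Q j))^[i] (P j)).det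
  have hW : (wronskian fun k w => (P k).eval w * Complex.exp ((Q k).eval w))
      = fun w => T.eval w * Complex.exp ((∑ k, Q k).eval w) :=
    funext (wronskian_eval_mul_exp P Q)
  have hT : T ≠ 0 := fun h0 => hz₀ (by simp [hW, h0])
  intro S _
  calc ∑ z ∈ S, ordAt _ z ≤ ∑ z ∈ S, T.rootMultiplicity z := by
        rw [hW]
        exact Finset.sum_le_sum fun z _ => ordAt_eval_mul_le_rootMultiplicity hT
          (Complex.contDiff_exp.comp (contDiff_eval _ _)) (Complex.exp_ne_zero _)
    _ ≤ T.natDegree := sum_rootMultiplicity_le_natDegree S T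
    _ ≤ m * p + m * (m - 1) / 2 * (q - 1) :=
        natDegree_det_le _ fun i j => natDegree_iterate_expDerivative_le (hP j) (hQ j) i
    _ = m * p + m * (m - 1) * (q - 1) / 2 := by
        rw [Nat.div_mul_right_comm (even_iff_two_dvd.mp m.even_mul_pred_self)]

theorem natDegree_gepP_le (p q m : ℕ) (l : GEPIdx p q m → ℂ) (k : Fin m) :
    (gepP p q m l k).natDegree ≤ p :=
  natDegree_sum_le_of_forall_le _ _ fun i _ => (natDegree_C_mul_X_pow_le _ _).trans i.is_le

theorem natDegree_gepQ_le (p q m : ℕ) (l : GEPIdx p q m → ℂ) (k : Fin m) :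
    (gepQ p q m l k).natDegree ≤ q :=
  natDegree_sum_le_of_forall_le _ _ fun j _ => (natDegree_C_mul_X_pow_le _ _).trans j.is_lt

theorem cyclicity_wronskian_gep_le_general (p q m : ℕ)
    (μ : GEPIdx p q m → ℂ) (κ : ℕ)
    (h : HasCyclicity 1 (Set.univ : Set (GEPIdx p q m → ℂ))
      (fun l => wronskian (fun k : Fin m => fun w =>
        (gepP p q m l k).eval w * Complex.exp ((gepQ p q m l k).eval w)))
      {μ} κ) :
    κ ≤ m * p + m * (m - 1) * (q - 1) / 2 := by
  obtain ⟨ε₀, hε₀, δ₀, hδ₀, -, -, hexact⟩ := h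
  obtain ⟨l, ⟨-, -, hl⟩, -, S, hS, rfl⟩ :=
    hexact (ε₀ / 2) ⟨by positivity, by linarith⟩ (δ₀ / 2) ⟨by positivity, by linarith⟩
  obtain ⟨z₀, -, hz₀⟩ : ∃ z ∈ ball (0 : ℂ) 1, wronskian (fun k : Fin m => fun w =>
      (gepP p q m l k).eval w * Complex.exp ((gepQ p q m l k).eval w)) z ≠ 0 := by
    simpa [centralSet] using hl
  exact atMostZeros_wronskian_eval_mul_exp (natDegree_gepP_le p q m l)
    (natDegree_gepQ_le p q m l) hz₀ (δ₀ / 2) S hS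

/-- The cyclicity at any point `μ ∈ ℂ^N` of the family of Wronskians
`W = {W(P₁e^{Q₁},…,P_m e^{Q_m})}_{λ∈ℂ^N}`, regarded as a family of holomorphic functions on
the unit disk depending holomorphically on `λ`, is at most `mp + (1/2)m(m−1)(q−1)`. -/
theorem cyclicity_wronskian_gep_le (p q m : ℕ) (hq : 1 ≤ q) (hm : 1 ≤ m)
    (μ : GEPIdx p q m → ℂ) (κ : ℕ)
    (h : HasCyclicity 1 (Set.univ : Set (GEPIdx p q m → ℂ))
      (fun l => wronskian (fun k : Fin m => fun w =>
        (gepP p q m l k).eval w * Complex.exp ((gepQ p q m l k).eval w)))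
      {μ} κ) :
    κ ≤ m * p + m * (m - 1) * (q - 1) / 2 :=
  cyclicity_wronskian_gep_le_general p q m μ κ h
end

section
/- Let ψ : ℂ^N → ℂ^N be the polynomial map sending each coordinate c_{ki} to c_{ki}^{i+1} (0 ≤ i ≤ p, 1 ≤ k ≤ m) and each coordinate d_{kj} to d_{kj}^{j} (1 ≤ j ≤ q, 1 ≤ k ≤ m). Then the Maclaurin coefficients of the family of generalized exponential polynomials satisfy a_n(ψ(z·λ)) = z^{n+1} · a_n(ψ(λ)) for all n ≥ 0, all z ∈ ℂ and all λ ∈ ℂ^N, where z·λ denotes scalar multiplication of the vector λ by z. -/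
/-- The polynomial map `ψ : ℂ^N → ℂ^N` sending each coordinate `c_{ki}` to `c_{ki}^{i+1}`
and each coordinate `d_{kj}` to `d_{kj}^j`. -/
def gepPsi (p q m : ℕ) (l : GEPIdx p q m → ℂ) : GEPIdx p q m → ℂ
  | Sum.inl (k, i) => l (Sum.inl (k, i)) ^ ((i : ℕ) + 1)
  | Sum.inr (k, j) => l (Sum.inr (k, j)) ^ ((j : ℕ) + 1)

/-! The exponents in `ψ` are chosen so that rescaling the parameter rescales the variable:
`ψ(z·λ)` multiplies the coefficient of `w^i` in `P_k` by `z^{i+1}` and that of `w^j` in `Q_k` by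
`z^j`, so that `f_{ψ(z·λ)}(w) = z · f_{ψ(λ)}(z w)`. Differentiating `n` times at `0` then
produces the factor `z^{n+1}`. -/

open Polynomial

theorem iteratedDeriv_const_mul_comp_const_mul {𝕜 : Type*} [NontriviallyNormedField 𝕜]
    {n : ℕ} {f : 𝕜 → 𝕜} (hf : ContDiff 𝕜 n f) (c x : 𝕜) :
    iteratedDeriv n (fun w => c * f (c * w)) x = c ^ (n + 1) * iteratedDeriv n f (c * x) := by
  rw [iteratedDeriv_const_mul_field, iteratedDeriv_comp_const_mul hf, pow_succ]
  ring

theorem contDiff_gep (p q m : ℕ) (l : GEPIdx p q m → ℂ) (n : WithTop ℕ∞) :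
    ContDiff ℂ n (gep p q m l) := by
  have hpoly (P : ℂ[X]) : ContDiff ℂ n fun x => P.eval x := by
    simpa using P.contDiff_aeval (𝕜 := ℂ) n
  exact ContDiff.sum fun k _ => (hpoly _).mul (Complex.contDiff_exp.comp (hpoly _))

section Scaling

variable (p q m : ℕ) (z w : ℂ) (l : GEPIdx p q m → ℂ) (k : Fin m)

theorem eval_gepP_gepPsi_smul :
    (gepP p q m (gepPsi p q m (z • l)) k).eval w
      = z * (gepP p q m (gepPsi p q m l) k).eval (z * w) := by
  simp only [gepP, gepPsi, eval_finsetSum, eval_mul, eval_C, eval_pow, eval_X,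
    Pi.smul_apply, smul_eq_mul, Finset.mul_sum]
  exact Finset.sum_congr rfl fun i _ => by ring

theorem eval_gepQ_gepPsi_smul :
    (gepQ p q m (gepPsi p q m (z • l)) k).eval w
      = (gepQ p q m (gepPsi p q m l) k).eval (z * w) := by
  simp only [gepQ, gepPsi, eval_finsetSum, eval_mul, eval_C, eval_pow, eval_X,
    Pi.smul_apply, smul_eq_mul]
  exact Finset.sum_congr rfl fun j _ => by ring

theorem gep_gepPsi_smul :
    gep p q m (gepPsi p q m (z • l)) w = z * gep p q m (gepPsi p q m l) (z * w) := by
  simp only [gep, eval_gepP_gepPsi_smul, eval_gepQ_gepPsi_smul, Finset.mul_sum, mul_assoc]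

end Scaling

theorem gepCoeff_psi_smul_general (p q m : ℕ)
    (n : ℕ) (z : ℂ) (l : GEPIdx p q m → ℂ) :
    gepCoeff p q m n (gepPsi p q m (z • l)) = z ^ (n + 1) * gepCoeff p q m n (gepPsi p q m l) := by
  have hscale : gep p q m (gepPsi p q m (z • l))
      = fun w => z * gep p q m (gepPsi p q m l) (z * w) :=
    funext (gep_gepPsi_smul p q m z · l)
  rw [gepCoeff, gepCoeff, hscale,
    iteratedDeriv_const_mul_comp_const_mul (contDiff_gep p q m _ n) z 0, mul_zero, mul_div_assoc]

/-- The Maclaurin coefficients of the family of generalized exponential polynomials satisfy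
`a_n(ψ(z·λ)) = z^{n+1} · a_n(ψ(λ))` for all `n ≥ 0`, `z ∈ ℂ` and `λ ∈ ℂ^N`. -/
theorem gepCoeff_psi_smul (p q m : ℕ) (hq : 1 ≤ q) (hm : 1 ≤ m)
    (n : ℕ) (z : ℂ) (l : GEPIdx p q m → ℂ) :
    gepCoeff p q m n (gepPsi p q m (z • l)) = z ^ (n + 1) * gepCoeff p q m n (gepPsi p q m l) :=
  gepCoeff_psi_smul_general p q m n z l
end
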